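/- arXiv:1709.08000 — 2 statements merged into one kernel-verified Lean document; each statement's English description precedes it below -/
import Mathlib

section
/- Let R be a commutative ring and x ∈ R. For all natural numbers n and m, the Bell polynomials satisfy the polynomial Spivey formula: B_{n+m}(x) = \sum_{j=0}^{m} \sum_{k=0}^{n} S(m,j) * C(n,k) * j^{n-k} * x^j * B_k(x) (with the convention 0^0 = 1). -/
/-- Stirling numbers of the second kind. -/
def stirling2 : ℕ → ℕ → ℕ
  | 0, 0 => 1
  | 0, _ + 1 => 0
  | _ + 1, 0 => 0
  | n + 1, k + 1 => stirling2 n k + (k + 1) * stirling2 n (k + 1)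

/-- Bell polynomials. -/
def bellPoly {R : Type*} [CommRing R] (x : R) (n : ℕ) : R :=
  ∑ k ∈ Finset.range (n + 1), (stirling2 n k : R) * x ^ k

/-!
Let `L : R[X] → R` be the `R`-linear functional with `L (X ^ n) = B_n(x)`. The recurrence
`B_{n+1} = x ∑ C(n,i) B_i` says `L (X * p) = x * L (p (X + 1))`. Iterating this and collecting
terms with the recurrence of `S` gives `L (X ^ m * p) = ∑ j, S(m,j) x^j L (p (X + j))`, and
`p = X ^ n` is Spivey's formula.
-/

open Finset Polynomial

theorem stirling2_succ_zero (n : ℕ) : stirling2 (n + 1) 0 = 0 := rfl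

theorem stirling2_succ_succ (n k : ℕ) :
    stirling2 (n + 1) (k + 1) = stirling2 n k + (k + 1) * stirling2 n (k + 1) := rfl

theorem stirling2_eq_stirlingSecond : stirling2 = Nat.stirlingSecond := by
  funext n k
  induction n generalizing k with
  | zero => cases k <;> rfl
  | succ n ih =>
    cases k with
    | zero => rfl
    | succ k => rw [stirling2_succ_succ, Nat.stirlingSecond_succ_succ, ih, ih, add_comm]

theorem stirling2_eq_zero_of_lt {n k : ℕ} (h : n < k) : stirling2 n k = 0 := by
  rw [stirling2_eq_stirlingSecond]
  exact Nat.stirlingSecond_eq_zero_of_lt h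

theorem stirling2_succ_succ_eq_sum_choose_mul (n k : ℕ) :
    stirling2 (n + 1) (k + 1) = ∑ i ∈ range (n + 1), n.choose i * stirling2 i k := by
  induction n generalizing k with
  | zero => cases k <;> rfl
  | succ n ih =>
    have sum_shift : ∑ i ∈ range (n + 1), n.choose i * stirling2 (i + 1) k
        = stirling2 (n + 1) k + k * stirling2 (n + 1) (k + 1) := by
      cases k with
      | zero => simp [stirling2_succ_zero]
      | succ k =>
        simp only [stirling2_succ_succ, mul_add, sum_add_distrib, mul_left_comm _ (k + 1),
          ← mul_sum, ← ih]
    have pascal := sum_choose_succ_mul (R := ℕ) (fun i _ => stirling2 i k) n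
    simp only [Nat.cast_id] at pascal
    rw [pascal, sum_shift, ← ih, stirling2_succ_succ (n + 1)]
    ring

theorem sum_range_stirling2_succ_mul {R : Type*} [Semiring R] (a : ℕ → R) (m : ℕ) :
    ∑ j ∈ range (m + 2), (stirling2 (m + 1) j : R) * a j
      = ∑ j ∈ range (m + 1), (stirling2 m j : R) * (j * a j + a (j + 1)) := by
  have shift := sum_range_succ' (fun j => ((j * stirling2 m j : ℕ) : R) * a j) (m + 1)
  rw [sum_range_succ, stirling2_eq_zero_of_lt m.lt_succ_self] at shift
  simp only [mul_zero, zero_mul, Nat.cast_zero, add_zero] at shift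
  calc ∑ j ∈ range (m + 2), (stirling2 (m + 1) j : R) * a j
      = ∑ j ∈ range (m + 1), ((stirling2 m j : R) * a (j + 1)
          + (((j + 1) * stirling2 m (j + 1) : ℕ) : R) * a (j + 1)) := by
        rw [sum_range_succ', stirling2_succ_zero, Nat.cast_zero, zero_mul, add_zero]
        simp only [stirling2_succ_succ, Nat.cast_add, add_mul]
    _ = ∑ j ∈ range (m + 1), (stirling2 m j : R) * (j * a j + a (j + 1)) := by
        rw [sum_add_distrib, ← shift, ← sum_add_distrib]
        refine sum_congr rfl fun j _ => ?_
        rw [mul_comm j, Nat.cast_mul, mul_assoc, mul_add, add_comm]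

section

variable {R : Type*} [CommRing R]

theorem bellPoly_eq_sum_range_of_le (x : R) {n N : ℕ} (h : n ≤ N) :
    bellPoly x n = ∑ k ∈ range (N + 1), (stirling2 n k : R) * x ^ k := by
  refine sum_subset (range_subset_range.2 (by omega)) fun k _ hk => ?_
  rw [stirling2_eq_zero_of_lt (by simpa using hk), Nat.cast_zero, zero_mul]

theorem bellPoly_succ (x : R) (n : ℕ) :
    bellPoly x (n + 1) = x * ∑ i ∈ range (n + 1), (n.choose i : R) * bellPoly x i := by
  calc bellPoly x (n + 1)
      = ∑ k ∈ range (n + 1), ∑ i ∈ range (n + 1),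
          x * ((n.choose i : R) * ((stirling2 i k : R) * x ^ k)) := by
        rw [bellPoly, sum_range_succ', stirling2_succ_zero, Nat.cast_zero, zero_mul, add_zero]
        refine sum_congr rfl fun k _ => ?_
        rw [stirling2_succ_succ_eq_sum_choose_mul, Nat.cast_sum, sum_mul]
        refine sum_congr rfl fun i _ => ?_
        push_cast
        ring
    _ = x * ∑ i ∈ range (n + 1), (n.choose i : R) * bellPoly x i := by
        rw [sum_comm, mul_sum]
        refine sum_congr rfl fun i hi => ?_
        rw [bellPoly_eq_sum_range_of_le x (Nat.lt_succ_iff.1 (mem_range.1 hi)), mul_sum, mul_sum]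

noncomputable def bellFunctional (x : R) : R[X] →ₗ[R] R :=
  lsum fun n => LinearMap.mulRight R (bellPoly x n)

theorem bellFunctional_monomial (x a : R) (n : ℕ) :
    bellFunctional x (monomial n a) = a * bellPoly x n := by
  simp [bellFunctional]

theorem bellFunctional_X_pow (x : R) (n : ℕ) : bellFunctional x (X ^ n) = bellPoly x n := by
  rw [← monomial_one_right_eq_X_pow, bellFunctional_monomial, one_mul]

theorem bellFunctional_C_mul (x a : R) (p : R[X]) :
    bellFunctional x (C a * p) = a * bellFunctional x p := by
  rw [C_mul', map_smul, smul_eq_mul]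

theorem bellFunctional_X_add_C_pow (x y : R) (n : ℕ) :
    bellFunctional x ((X + C y) ^ n)
      = ∑ k ∈ range (n + 1), (n.choose k : R) * y ^ (n - k) * bellPoly x k := by
  rw [add_pow, map_sum]
  refine sum_congr rfl fun k _ => ?_
  rw [← C_pow, ← map_natCast C, mul_assoc, ← C_mul, X_pow_mul, C_mul_X_pow_eq_monomial,
    bellFunctional_monomial, mul_comm (y ^ _)]

theorem bellFunctional_X_mul (x : R) (p : R[X]) :
    bellFunctional x (X * p) = x * bellFunctional x (p.comp (X + 1)) := by
  induction p using Polynomial.induction_on' with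
  | add p q hp hq => rw [mul_add, map_add, hp, hq, add_comp, map_add, mul_add]
  | monomial n a =>
    rw [X_mul_monomial, bellFunctional_monomial, monomial_comp, bellFunctional_C_mul, ← C_1,
      bellFunctional_X_add_C_pow, bellPoly_succ]
    simp only [one_pow, mul_one]
    ring

theorem bellFunctional_X_pow_mul (x : R) (m : ℕ) (p : R[X]) :
    bellFunctional x (X ^ m * p) = ∑ j ∈ range (m + 1),
      (stirling2 m j : R) * (x ^ j * bellFunctional x (p.comp (X + C (j : R)))) := by
  induction m generalizing p with
  | zero => simp [stirling2]
  | succ m ih =>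
    rw [pow_succ, mul_assoc, ih, sum_range_stirling2_succ_mul]
    refine sum_congr rfl fun j _ => ?_
    have translate : (X + C (j : R)).comp (X + 1) = X + C ((j + 1 : ℕ) : R) := by
      rw [add_comp, X_comp, C_comp, Nat.cast_succ, C_add, C_1]
      ring
    rw [mul_comp, X_comp, add_mul, map_add, bellFunctional_X_mul, bellFunctional_C_mul,
      comp_assoc, translate]
    ring

end

/-- Polynomial version of Spivey's Bell number formula. -/
theorem spivey_bell_poly {R : Type*} [CommRing R] (x : R) (n m : ℕ) :
    bellPoly x (n + m) =
      ∑ j ∈ Finset.range (m + 1), ∑ k ∈ Finset.range (n + 1),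
        (stirling2 m j : R) * (Nat.choose n k : R) * (j : R) ^ (n - k) * x ^ j *
          bellPoly x k := by
  rw [← bellFunctional_X_pow, add_comm, pow_add, bellFunctional_X_pow_mul]
  refine sum_congr rfl fun j _ => ?_
  rw [X_pow_comp, bellFunctional_X_add_C_pow, mul_sum, mul_sum]
  refine sum_congr rfl fun k _ => ?_
  ring
end

section
/- Let R be a commutative ring, q, m, r ∈ R, A an associative unital R-algebra, and a, b ∈ A satisfying the q-commutation relation a*b - q•(b*a) = 1. Then for every natural number k: (m•(b*a) + r•1)*(b^k) = (b^k)*((m*[k]_q + r)•1 + (m*q^k)•(b*a)). -/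
/-!
Write `N = b * a` for the number operator. The relation `a * b = 1 + q • (b * a)` gives
`N * b = b * (1 + q • N)`, so commuting `N` past `b ^ k` one factor at a time yields
`N * b ^ k = b ^ k * ([k]_q + q ^ k • N)`, via `[k + 1]_q = [k]_q + q ^ k`.
The affine expression `m • N + r` then follows by linearity.
-/

/-- The q-integer [n]_q. -/
def qInt {R : Type*} [CommRing R] (q : R) (n : ℕ) : R :=
  ∑ i ∈ Finset.range n, q ^ i

section

variable {R A : Type*} [CommRing R] [Semiring A] [Algebra R A] {q : R} {a b : A}

theorem qInt_zero (q : R) : qInt q 0 = 0 := Finset.sum_range_zero _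

theorem qInt_succ (q : R) (k : ℕ) : qInt q (k + 1) = qInt q k + q ^ k :=
  Finset.sum_range_succ _ _

theorem numberOp_mul_of_mul_eq (h : a * b = 1 + q • (b * a)) :
    b * a * b = b * (1 + q • (b * a)) := by
  rw [mul_assoc, h]

theorem numberOp_mul_pow_of_mul_eq (h : a * b = 1 + q • (b * a)) (k : ℕ) :
    b * a * b ^ k = b ^ k * (qInt q k • (1 : A) + q ^ k • (b * a)) := by
  induction k with
  | zero => simp [qInt_zero]
  | succ k ih =>
    calc b * a * b ^ (k + 1)
        = b ^ k * (qInt q k • b + q ^ k • (b * a * b)) := by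
          rw [pow_succ, ← mul_assoc, ih, mul_assoc, add_mul, smul_mul_assoc, smul_mul_assoc,
            one_mul]
      _ = b ^ (k + 1) * (qInt q (k + 1) • (1 : A) + q ^ (k + 1) • (b * a)) := by
          rw [numberOp_mul_of_mul_eq h, qInt_succ, pow_succ, mul_assoc]
          congr 1
          simp only [mul_add, mul_one, mul_smul_comm, smul_add, smul_smul, add_smul, ← pow_succ]
          abel

end

/-- The identity (m b a + r) b^k = b^k ((m [k]_q + r) + m q^k b a). -/
theorem qBoson_affine_numberOp_pow {R : Type*} [CommRing R] (q m r : R) {A : Type*}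
    [Ring A] [Algebra R A] (a b : A) (h : a * b - q • (b * a) = 1) (k : ℕ) :
    (m • (b * a) + r • (1 : A)) * b ^ k =
      b ^ k * ((m * qInt q k + r) • (1 : A) + (m * q ^ k) • (b * a)) := by
  have hN := numberOp_mul_pow_of_mul_eq (eq_add_of_sub_eq h) k
  rw [add_mul, smul_mul_assoc, hN, smul_mul_assoc, one_mul]
  simp only [mul_add, mul_smul_comm, mul_one, smul_add, smul_smul, add_smul]
  abel
end
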